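/- arXiv:2502.18370 — 2 statements merged into one kernel-verified Lean document; each statement's English description precedes it below -/
import Mathlib

section
/- Let μ = Σ_{i=1}^l aᵢ δ_{xᵢ} be a finitely-atomic measure on ℝⁿ with pairwise distinct atoms x₁,…,x_l ∈ ℝⁿ and weights aᵢ > 0. For every d ≥ 2(l−1), the truncated moment matrix (M^μ_{α,β})_{|α|,|β| ≤ d}, with entries M^μ_{α,β} = ∫ x^{α+β} dμ, has rank exactly l. -/
noncomputable instance truncMultiIndexFintype (n d : ℕ) :
    Fintype {α : Fin n → ℕ // ∑ i, α i ≤ d} := by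
  apply Fintype.ofInjective
    (fun α : {α : Fin n → ℕ // ∑ i, α i ≤ d} => fun i : Fin n =>
      (⟨α.1 i, Nat.lt_succ_of_le <|
        le_trans (Finset.single_le_sum (f := fun i => α.1 i)
          (fun _ _ => Nat.zero_le _) (Finset.mem_univ i)) α.2⟩ : Fin (d + 1)))
  intro a b hab
  apply Subtype.ext
  funext i
  exact congrArg Fin.val (congrFun hab i)

open MvPolynomial in
lemma key_indep {n l : ℕ} (x : Fin l → (Fin n → ℝ)) (hx : Function.Injective x)
    (d : ℕ) (hd : l - 1 ≤ d) (c : Fin l → ℝ)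
    (h : ∀ α : {α : Fin n → ℕ // ∑ i, α i ≤ d}, ∑ i, c i * ∏ j, x i j ^ α.1 j = 0) :
    c = 0 := by
  funext i₀
  have hne : ∀ j : Fin l, j ≠ i₀ → ∃ k, x j k ≠ x i₀ k := by
    intro j hj
    by_contra hc
    push_neg at hc
    exact hj (hx (funext hc))
  set s : Finset (Fin l) := Finset.univ.erase i₀ with hs
  have hmem : ∀ j : {j // j ∈ s}, j.1 ≠ i₀ := fun j => Finset.ne_of_mem_erase j.2
  let k : {j // j ∈ s} → Fin n := fun j => (hne j.1 (hmem j)).choose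
  have hk : ∀ j : {j // j ∈ s}, x j.1 (k j) ≠ x i₀ (k j) := fun j => (hne j.1 (hmem j)).choose_spec
  set p : MvPolynomial (Fin n) ℝ :=
    ∏ j ∈ s.attach, (X (k j) - C (x j.1 (k j))) with hp
  have hdeg : p.totalDegree ≤ d := by
    refine le_trans (totalDegree_finset_prod _ _) (le_trans ?_ hd)
    calc ∑ j ∈ s.attach, (X (k j) - C (x j.1 (k j))).totalDegree
        ≤ ∑ _j ∈ s.attach, 1 := by
          refine Finset.sum_le_sum fun j _ => ?_
          refine le_trans (totalDegree_sub _ _) ?_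
          simp [totalDegree_X, totalDegree_C]
      _ = s.card := by simp
      _ = l - 1 := by
          rw [hs, Finset.card_erase_of_mem (Finset.mem_univ _)]
          simp
  have heval0 : ∀ j : Fin l, j ≠ i₀ → eval (x j) p = 0 := by
    intro j hj
    rw [hp, map_prod]
    refine Finset.prod_eq_zero (Finset.mem_attach _ ⟨j, Finset.mem_erase.2 ⟨hj, Finset.mem_univ _⟩⟩) ?_
    simp
  have hevali : eval (x i₀) p ≠ 0 := by
    rw [hp, map_prod]
    refine Finset.prod_ne_zero_iff.2 fun j _ => ?_
    simpa [sub_eq_zero] using (hk j).symm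
  have hsum : ∑ i, c i * eval (x i) p = 0 := by
    have : ∀ i, c i * eval (x i) p
        = ∑ m ∈ p.support, p.coeff m * (c i * ∏ j, x i j ^ m j) := by
      intro i
      rw [eval_eq', Finset.mul_sum]
      refine Finset.sum_congr rfl fun m _ => by ring
    simp_rw [this]
    rw [Finset.sum_comm]
    refine Finset.sum_eq_zero fun m hm => ?_
    rw [← Finset.mul_sum]
    have hmd : ∑ j, m j ≤ d := by
      refine le_trans ?_ (le_trans (le_totalDegree hm) hdeg)
      rw [Finsupp.sum_fintype _ _ (fun _ => rfl)]
    rw [h ⟨fun j => m j, hmd⟩, mul_zero]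
  have : c i₀ * eval (x i₀) p = 0 := by
    rw [← hsum]
    exact (Finset.sum_eq_single (f := fun i => c i * eval (x i) p) i₀
      (fun j _ hj => by show c j * eval (x j) p = 0; rw [heval0 j hj, mul_zero])
      (fun hi => absurd (Finset.mem_univ i₀) hi)).symm
  rcases mul_eq_zero.1 this with h0 | h0
  · exact h0
  · exact absurd h0 hevali

/-- The truncated moment matrix of a finitely-atomic measure with `l` distinct atoms and
positive weights has rank exactly `l` for every degree `d ≥ 2(l-1)`. -/
theorem stmt_7 {n l : ℕ} (x : Fin l → (Fin n → ℝ)) (hx : Function.Injective x)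
    (a : Fin l → ℝ) (ha : ∀ i, 0 < a i) (d : ℕ) (hd : 2 * (l - 1) ≤ d) :
    Matrix.rank (Matrix.of fun α β : {α : Fin n → ℕ // ∑ i, α i ≤ d} =>
      ∑ i, a i * ∏ j, x i j ^ (α.1 j + β.1 j)) = l := by
  set Idx := {α : Fin n → ℕ // ∑ i, α i ≤ d}
  set B : Matrix Idx (Fin l) ℝ :=
    Matrix.of fun (α : Idx) (i : Fin l) => Real.sqrt (a i) * ∏ j, x i j ^ α.1 j with hB
  have hM : (Matrix.of fun α β : Idx =>
      ∑ i, a i * ∏ j, x i j ^ (α.1 j + β.1 j)) = B * B.transpose := by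
    ext α β
    simp only [Matrix.mul_apply, Matrix.transpose_apply, hB, Matrix.of_apply]
    refine Finset.sum_congr rfl fun i _ => ?_
    have hsq : Real.sqrt (a i) * Real.sqrt (a i) = a i :=
      Real.mul_self_sqrt (ha i).le
    rw [mul_mul_mul_comm, hsq, ← Finset.prod_mul_distrib]
    simp_rw [← pow_add]
  rw [hM, Matrix.rank_self_mul_transpose]
  have hinj : Function.Injective B.mulVecLin := by
    rw [← LinearMap.ker_eq_bot, LinearMap.ker_eq_bot']
    intro c hc
    have hc' : ∀ α : Idx, ∑ i, (c i * Real.sqrt (a i)) * ∏ j, x i j ^ α.1 j = 0 := by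
      intro α
      have := congrFun hc α
      simp only [Matrix.mulVecLin_apply, Matrix.mulVec, dotProduct, hB,
        Matrix.of_apply, Pi.zero_apply] at this
      rw [← this]
      refine Finset.sum_congr rfl fun i _ => by ring
    have hd' : l - 1 ≤ d := le_trans (Nat.le_mul_of_pos_left _ (by norm_num)) hd
    have := key_indep x hx d hd' _ hc'
    funext i
    have hi := congrFun this i
    simp only [Pi.zero_apply] at hi ⊢
    have hsqrt : Real.sqrt (a i) ≠ 0 := Real.sqrt_ne_zero'.2 (ha i)
    exact (mul_eq_zero.1 hi).resolve_right hsqrt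
  rw [Matrix.rank, LinearMap.finrank_range_of_inj hinj]
  simp
end

section
/- Let K ⊆ [−1,1]ⁿ be closed, f continuous on K attaining its minimum f* on K, S* := {x ∈ K : f(x) = f*}, and suppose a Łojasiewicz inequality dist(x, S*)^L ≤ c·(f(x) − f*) holds on K with L ≥ 1, c ≥ 0. Then for every finitely-atomic probability measure ν = Σᵢ aᵢ δ_{xᵢ} on K, choosing for each atom a closest point xᵢ* ∈ S* and setting μ_S := Σᵢ aᵢ δ_{xᵢ*} ∈ 𝓜(S*), it holds for any multi-index α: |∫ x^α dν − ∫ x^α dμ_S| ≤ |α| · c^{1/L} · (∫ f dν − f*)^{1/L}. -/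
/-!
Moving each atom `xᵢ` to its nearest minimizer `xᵢ*` changes a monomial of degree `|α|` by at
most `|α| · dᵢ`, `dᵢ = ‖xᵢ - xᵢ*‖`, since monomials are `|α|`-Lipschitz coordinatewise on
`[-1, 1]ⁿ`. The Łojasiewicz inequality bounds `dᵢ ^ L = dist(xᵢ, S*) ^ L` by `c (f xᵢ - f*)`, and the
power mean inequality `∑ aᵢ dᵢ ≤ (∑ aᵢ dᵢ ^ L) ^ (1/L)` turns the averaged bound into the claim.
-/

open Finset

section OrderedRing

variable {R : Type*} [CommRing R] [LinearOrder R] [IsStrictOrderedRing R]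

theorem abs_pow_sub_pow_le_of_abs_le_one {a b : R} (ha : |a| ≤ 1) (hb : |b| ≤ 1) (m : ℕ) :
    |a ^ m - b ^ m| ≤ m * |a - b| :=
  calc |a ^ m - b ^ m| ≤ |a - b| * m * max |a| |b| ^ (m - 1) := abs_pow_sub_pow_le ..
    _ ≤ |a - b| * m * 1 := by gcongr; exact pow_le_one₀ (by positivity) (max_le ha hb)
    _ = m * |a - b| := by ring

theorem Finset.abs_prod_sub_prod_le_sum {ι : Type*} (s : Finset ι) {u v : ι → R}
    (hu : ∀ i ∈ s, |u i| ≤ 1) (hv : ∀ i ∈ s, |v i| ≤ 1) :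
    |∏ i ∈ s, u i - ∏ i ∈ s, v i| ≤ ∑ i ∈ s, |u i - v i| := by
  induction s using Finset.cons_induction with
  | empty => simp
  | cons j s hj ih =>
    simp only [forall_mem_cons] at hu hv
    have hprod_v : |∏ i ∈ s, v i| ≤ 1 := by
      rw [abs_prod]; exact prod_le_one (fun i _ => abs_nonneg _) hv.2
    rw [prod_cons, prod_cons, sum_cons]
    calc |u j * ∏ i ∈ s, u i - v j * ∏ i ∈ s, v i|
        = |u j * (∏ i ∈ s, u i - ∏ i ∈ s, v i) + (u j - v j) * ∏ i ∈ s, v i| := by ring_nf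
      _ ≤ |u j| * |∏ i ∈ s, u i - ∏ i ∈ s, v i| + |u j - v j| * |∏ i ∈ s, v i| := by
          rw [← abs_mul, ← abs_mul]; exact abs_add_le _ _
      _ ≤ 1 * ∑ i ∈ s, |u i - v i| + |u j - v j| * 1 := by
          gcongr
          exacts [hu.1, ih hu.2 hv.2]
      _ = |u j - v j| + ∑ i ∈ s, |u i - v i| := by ring

theorem abs_monomial_sub_monomial_le {ι : Type*} [Fintype ι] {u v : ι → R} {δ : R}
    (hu : ∀ j, |u j| ≤ 1) (hv : ∀ j, |v j| ≤ 1) (huv : ∀ j, |u j - v j| ≤ δ) (α : ι → ℕ) :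
    |∏ j, u j ^ α j - ∏ j, v j ^ α j| ≤ ((∑ j, α j : ℕ) : R) * δ :=
  calc |∏ j, u j ^ α j - ∏ j, v j ^ α j| ≤ ∑ j, |u j ^ α j - v j ^ α j| :=
        abs_prod_sub_prod_le_sum _ (fun j _ => by rw [abs_pow]; exact pow_le_one₀ (by positivity) (hu j))
          (fun j _ => by rw [abs_pow]; exact pow_le_one₀ (by positivity) (hv j))
    _ ≤ ∑ j, (α j : R) * δ := by
        gcongr with j
        exact (abs_pow_sub_pow_le_of_abs_le_one (hu j) (hv j) _).trans (by gcongr; exact huv j)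
    _ = ((∑ j, α j : ℕ) : R) * δ := by push_cast; rw [sum_mul]

end OrderedRing

theorem Metric.infDist_eq_dist_of_forall_dist_le {X : Type*} [PseudoMetricSpace X] {s : Set X}
    {x y : X} (hy : y ∈ s) (h : ∀ z ∈ s, dist x y ≤ dist x z) : infDist x s = dist x y :=
  le_antisymm (infDist_le_dist_of_mem hy) ((le_infDist ⟨y, hy⟩).2 h)

theorem abs_sum_mul_sub_sum_mul_le {ι : Type*} (s : Finset ι) {w u v : ι → ℝ}
    (hw : ∀ i ∈ s, 0 ≤ w i) :
    |∑ i ∈ s, w i * u i - ∑ i ∈ s, w i * v i| ≤ ∑ i ∈ s, w i * |u i - v i| := by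
  rw [← sum_sub_distrib]
  refine (abs_sum_le_sum_abs _ _).trans_eq (sum_congr rfl fun i hi => ?_)
  rw [← mul_sub, abs_mul, abs_of_nonneg (hw i hi)]

theorem sum_mul_sub_eq_of_sum_eq_one {ι : Type*} (s : Finset ι) {w g : ι → ℝ}
    (hw₁ : ∑ i ∈ s, w i = 1) (m : ℝ) :
    ∑ i ∈ s, w i * (g i - m) = ∑ i ∈ s, w i * g i - m := by
  simp only [mul_sub, sum_sub_distrib, ← sum_mul, hw₁, one_mul]

theorem weighted_sum_le_rpow_of_rpow_le {ι : Type*} (s : Finset ι) {w d g : ι → ℝ} {L : ℝ}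
    (hw : ∀ i ∈ s, 0 ≤ w i) (hw₁ : ∑ i ∈ s, w i = 1) (hd : ∀ i ∈ s, 0 ≤ d i) (hL : 1 ≤ L)
    (hdg : ∀ i ∈ s, d i ^ L ≤ g i) :
    ∑ i ∈ s, w i * d i ≤ (∑ i ∈ s, w i * g i) ^ (1 / L) :=
  calc ∑ i ∈ s, w i * d i ≤ (∑ i ∈ s, w i * d i ^ L) ^ (1 / L) :=
        Real.arith_mean_le_rpow_mean s w d hw hw₁ hd hL
    _ ≤ (∑ i ∈ s, w i * g i) ^ (1 / L) := by
        gcongr with i hi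
        · exact sum_nonneg fun i hi => mul_nonneg (hw i hi) (Real.rpow_nonneg (hd i hi) L)
        · exact hw i hi
        · exact hdg i hi

theorem stmt_13_general {n l : ℕ} (K : Set (EuclideanSpace ℝ (Fin n)))
    (hKsub : ∀ x ∈ K, ∀ i, x i ∈ Set.Icc (-1 : ℝ) 1)
    (f : EuclideanSpace ℝ (Fin n) → ℝ)
    (fstar : ℝ) (hlow : ∀ x ∈ K, fstar ≤ f x)
    (Sstar : Set (EuclideanSpace ℝ (Fin n))) (hSstar : Sstar = {x ∈ K | f x = fstar})
    (c L : ℝ) (hc : 0 ≤ c) (hL : 1 ≤ L)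
    (hloja : ∀ x ∈ K, Metric.infDist x Sstar ^ L ≤ c * (f x - fstar))
    (a : Fin l → ℝ) (ha : ∀ i, 0 < a i) (hsum : ∑ i, a i = 1)
    (xs : Fin l → EuclideanSpace ℝ (Fin n)) (hxs : ∀ i, xs i ∈ K)
    (xstar : Fin l → EuclideanSpace ℝ (Fin n))
    (hxstar : ∀ i, xstar i ∈ Sstar ∧ ∀ y ∈ Sstar, dist (xs i) (xstar i) ≤ dist (xs i) y)
    (α : Fin n → ℕ) :
    |(∑ i, a i * ∏ j, xs i j ^ α j) - ∑ i, a i * ∏ j, xstar i j ^ α j|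
      ≤ ((∑ j, α j : ℕ) : ℝ) * c ^ (1 / L) *
        ((∑ i, a i * f (xs i)) - fstar) ^ (1 / L) := by
  have hbox : ∀ x ∈ K, ∀ j, |x j| ≤ 1 := fun x hx j => abs_le.2 (hKsub x hx j)
  have hSK : Sstar ⊆ K := hSstar ▸ Set.sep_subset K _
  have hmoment : ∀ i, |∏ j, xs i j ^ α j - ∏ j, xstar i j ^ α j|
      ≤ ((∑ j, α j : ℕ) : ℝ) * dist (xs i) (xstar i) := fun i =>
    abs_monomial_sub_monomial_le (hbox _ (hxs i)) (hbox _ (hSK (hxstar i).1))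
      (fun j => by rw [← Real.dist_eq]; exact PiLp.dist_apply_le _ _ j) α
  have hloja_atom : ∀ i, dist (xs i) (xstar i) ^ L ≤ c * (f (xs i) - fstar) := fun i => by
    rw [← Metric.infDist_eq_dist_of_forall_dist_le (hxstar i).1 (hxstar i).2]
    exact hloja _ (hxs i)
  have hgap : 0 ≤ ∑ i, a i * (f (xs i) - fstar) :=
    sum_nonneg fun i _ => mul_nonneg (ha i).le (sub_nonneg.2 (hlow _ (hxs i)))
  rw [← sum_mul_sub_eq_of_sum_eq_one (g := fun i => f (xs i)) _ hsum fstar]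
  calc |(∑ i, a i * ∏ j, xs i j ^ α j) - ∑ i, a i * ∏ j, xstar i j ^ α j|
      ≤ ∑ i, a i * (((∑ j, α j : ℕ) : ℝ) * dist (xs i) (xstar i)) :=
        (abs_sum_mul_sub_sum_mul_le _ fun i _ => (ha i).le).trans
          (sum_le_sum fun i _ => mul_le_mul_of_nonneg_left (hmoment i) (ha i).le)
    _ = ((∑ j, α j : ℕ) : ℝ) * ∑ i, a i * dist (xs i) (xstar i) := by
        rw [mul_sum]; simp only [mul_left_comm]
    _ ≤ ((∑ j, α j : ℕ) : ℝ) * (∑ i, a i * (c * (f (xs i) - fstar))) ^ (1 / L) := by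
        gcongr
        exact weighted_sum_le_rpow_of_rpow_le _ (fun i _ => (ha i).le) hsum
          (fun i _ => dist_nonneg) hL (fun i _ => hloja_atom i)
    _ = ((∑ j, α j : ℕ) : ℝ) * c ^ (1 / L) * (∑ i, a i * (f (xs i) - fstar)) ^ (1 / L) := by
        rw [mul_assoc, ← Real.mul_rpow hc hgap, mul_sum]
        simp only [mul_left_comm]

/-- Quantitative comparison of the moments of an almost-optimal atomic measure with the
moments of its projection onto the set of minimizers, via a Łojasiewicz inequality. -/
theorem stmt_13 {n l : ℕ} (K : Set (EuclideanSpace ℝ (Fin n)))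
    (hK : IsClosed K) (hKsub : ∀ x ∈ K, ∀ i, x i ∈ Set.Icc (-1 : ℝ) 1)
    (f : EuclideanSpace ℝ (Fin n) → ℝ) (hf : ContinuousOn f K)
    (fstar : ℝ) (hlow : ∀ x ∈ K, fstar ≤ f x)
    (Sstar : Set (EuclideanSpace ℝ (Fin n))) (hSstar : Sstar = {x ∈ K | f x = fstar})
    (hSne : Sstar.Nonempty)
    (c L : ℝ) (hc : 0 ≤ c) (hL : 1 ≤ L)
    (hloja : ∀ x ∈ K, Metric.infDist x Sstar ^ L ≤ c * (f x - fstar))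
    (a : Fin l → ℝ) (ha : ∀ i, 0 < a i) (hsum : ∑ i, a i = 1)
    (xs : Fin l → EuclideanSpace ℝ (Fin n)) (hxs : ∀ i, xs i ∈ K)
    (xstar : Fin l → EuclideanSpace ℝ (Fin n))
    (hxstar : ∀ i, xstar i ∈ Sstar ∧ ∀ y ∈ Sstar, dist (xs i) (xstar i) ≤ dist (xs i) y)
    (α : Fin n → ℕ) :
    |(∑ i, a i * ∏ j, xs i j ^ α j) - ∑ i, a i * ∏ j, xstar i j ^ α j|
      ≤ ((∑ j, α j : ℕ) : ℝ) * c ^ (1 / L) *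
        ((∑ i, a i * f (xs i)) - fstar) ^ (1 / L) :=
  stmt_13_general K hKsub f fstar hlow Sstar hSstar c L hc hL hloja a ha hsum xs hxs xstar hxstar α
end
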